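/- arXiv:0802.4438 — 2 statements merged into one kernel-verified Lean document; each statement's English description precedes it below -/
import Mathlib

section
/- If 0 < β < 1, α > 0, 0 ≤ κ < 1 and ε > ε_c = 2αβ^{3/2}(1−κβ)^{1/2}, then every complex root of the polynomial λ³ + ελ² + ((1−β²)/β)λ + 2αβ^{1/2}(1−β²)(1−κβ)^{1/2} has strictly negative real part. -/
lemma cubic_hurwitz (a b c : ℝ) (ha : 0 < a) (hb : 0 < b) (hc : 0 < c)
    (hab : c < a * b) :
    ∀ z : ℂ, z ^ 3 + (a : ℂ) * z ^ 2 + (b : ℂ) * z + (c : ℂ) = 0 → z.re < 0 := by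
  intro z hz
  by_contra hx
  push_neg at hx
  set x := z.re with hxdef
  set y := z.im with hydef
  have hre : x ^ 3 - 3 * x * y ^ 2 + a * (x ^ 2 - y ^ 2) + b * x + c = 0 := by
    have := congrArg Complex.re hz
    simp [Complex.add_re, Complex.mul_re, pow_succ, Complex.mul_im, Complex.mul_re] at this
    nlinarith [this]
  have him : y * (3 * x ^ 2 - y ^ 2 + 2 * a * x + b) = 0 := by
    have := congrArg Complex.im hz
    simp [Complex.add_im, Complex.mul_im, pow_succ, Complex.mul_re] at this
    nlinarith [this]
  rcases mul_eq_zero.mp him with hy | hy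
  · rw [hy] at hre
    nlinarith [pow_nonneg hx 3, sq_nonneg x]
  · have hy2 : y ^ 2 = 3 * x ^ 2 + 2 * a * x + b := by nlinarith
    rw [hy2] at hre
    nlinarith [sq_nonneg x, mul_nonneg ha.le hx, mul_nonneg hb.le hx]

/-- Stability half of Theorem 2.2: if `ε > ε_c` then every complex root of
the negated characteristic polynomial has strictly negative real part. -/
theorem wgss_stability (β α ε κ : ℝ)
    (hβ0 : 0 < β) (hβ1 : β < 1) (hα : 0 < α)
    (hκ0 : 0 ≤ κ) (hκ1 : κ < 1)
    (hε : ε > 2 * α * β ^ ((3 : ℝ) / 2) * Real.sqrt (1 - κ * β)) :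
    ∀ z : ℂ,
      z ^ 3 + (ε : ℂ) * z ^ 2 + (((1 - β ^ 2) / β : ℝ) : ℂ) * z
        + ((2 * α * Real.sqrt β * (1 - β ^ 2) * Real.sqrt (1 - κ * β) : ℝ) : ℂ)
        = 0 → z.re < 0 := by
  have hκβ : 0 < 1 - κ * β := by nlinarith
  have hs2 : 0 < Real.sqrt (1 - κ * β) := Real.sqrt_pos.mpr hκβ
  have hsβ : 0 < Real.sqrt β := Real.sqrt_pos.mpr hβ0
  have hβ2 : 0 < 1 - β ^ 2 := by nlinarith
  have hb : 0 < (1 - β ^ 2) / β := div_pos hβ2 hβ0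
  have hc : 0 < 2 * α * Real.sqrt β * (1 - β ^ 2) * Real.sqrt (1 - κ * β) := by positivity
  have hεc : 0 < 2 * α * β ^ ((3 : ℝ) / 2) * Real.sqrt (1 - κ * β) := by
    have := Real.rpow_pos_of_pos hβ0 ((3 : ℝ) / 2)
    positivity
  have hε0 : 0 < ε := hεc.trans hε
  have hpow : β ^ ((3 : ℝ) / 2) = β * Real.sqrt β := by
    rw [show ((3:ℝ)/2) = (1:ℝ) + 1/2 by norm_num, Real.rpow_add hβ0,
      Real.rpow_one, Real.sqrt_eq_rpow]
  have key : (2 * α * β ^ ((3 : ℝ) / 2) * Real.sqrt (1 - κ * β)) * ((1 - β ^ 2) / β)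
      = 2 * α * Real.sqrt β * (1 - β ^ 2) * Real.sqrt (1 - κ * β) := by
    rw [hpow]; field_simp
  have hab : 2 * α * Real.sqrt β * (1 - β ^ 2) * Real.sqrt (1 - κ * β)
      < ε * ((1 - β ^ 2) / β) := by
    rw [← key]
    exact mul_lt_mul_of_pos_right hε hb
  exact cubic_hurwitz ε ((1 - β ^ 2) / β)
    (2 * α * Real.sqrt β * (1 - β ^ 2) * Real.sqrt (1 - κ * β)) hε0 hb hc hab
end

section
/- If 0 < β < 1, α > 0, 0 ≤ κ < 1 and 0 < ε < ε_c = 2αβ^{3/2}(1−κβ)^{1/2}, then the polynomial λ³ + ελ² + ((1−β²)/β)λ + 2αβ^{1/2}(1−β²)(1−κβ)^{1/2} has at least one complex root with strictly positive real part. -/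
/-- A monic real cubic `λ³ + aλ² + bλ + c` with positive coefficients and
`a*b < c` has a complex root with strictly positive real part. -/
lemma cubic_unstable (a b c : ℝ) (ha : 0 < a) (hb : 0 < b) (hc : 0 < c)
    (hab : a * b < c) :
    ∃ z : ℂ, z ^ 3 + (a : ℂ) * z ^ 2 + (b : ℂ) * z + (c : ℂ) = 0 ∧ 0 < z.re := by
  -- a negative real root r
  obtain ⟨r, hrmem, hr⟩ :
      ∃ r ∈ Set.Icc (-(1 + a + b + c)) (0 : ℝ), r ^ 3 + a * r ^ 2 + b * r + c = 0 := by
    have hle : -(1 + a + b + c) ≤ (0 : ℝ) := by linarith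
    have hcont : ContinuousOn (fun x : ℝ => x ^ 3 + a * x ^ 2 + b * x + c)
        (Set.Icc (-(1 + a + b + c)) 0) := (by continuity : Continuous _).continuousOn
    have hmem : (0 : ℝ) ∈ Set.Icc ((fun x : ℝ => x ^ 3 + a * x ^ 2 + b * x + c) (-(1 + a + b + c)))
        ((fun x : ℝ => x ^ 3 + a * x ^ 2 + b * x + c) 0) := by
      constructor
      · simp only
        nlinarith [sq_nonneg (1 + a + b + c), sq_nonneg (a + b + c), mul_pos ha hb,
          mul_pos hb hc, mul_pos ha hc]
      · simp only
        nlinarith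
    obtain ⟨r, hr1, hr2⟩ := intermediate_value_Icc hle hcont hmem
    exact ⟨r, hr1, hr2⟩
  have hrneg : r < 0 := by
    rcases lt_or_eq_of_le hrmem.2 with h | h
    · exact h
    · exfalso; rw [h] at hr; nlinarith
  have hq : 0 < r ^ 2 + a * r + b := by
    nlinarith [mul_pos (neg_pos.mpr hrneg) hc]
  have key : (r ^ 2 + b) * (-(a + r)) = c - a * b := by linear_combination (-1 : ℝ) * hr
  have hrb : 0 < r ^ 2 + b := by positivity
  have hp : a + r < 0 := by nlinarith [key]
  -- square root of the discriminant
  obtain ⟨w, hw, hwre⟩ : ∃ w : ℂ,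
      w ^ 2 = (((a + r) ^ 2 - 4 * (r ^ 2 + a * r + b) : ℝ) : ℂ) ∧ 0 ≤ w.re := by
    rcases le_or_gt 0 ((a + r) ^ 2 - 4 * (r ^ 2 + a * r + b)) with hD | hD
    · refine ⟨((Real.sqrt ((a + r) ^ 2 - 4 * (r ^ 2 + a * r + b)) : ℝ) : ℂ), ?_, ?_⟩
      · rw [← Complex.ofReal_pow, Real.sq_sqrt hD]
      · rw [Complex.ofReal_re]; exact Real.sqrt_nonneg _
    · refine ⟨((Real.sqrt (-((a + r) ^ 2 - 4 * (r ^ 2 + a * r + b))) : ℝ) : ℂ) * Complex.I,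
        ?_, ?_⟩
      · rw [mul_pow, Complex.I_sq, ← Complex.ofReal_pow,
          Real.sq_sqrt (by linarith : (0:ℝ) ≤ -((a + r) ^ 2 - 4 * (r ^ 2 + a * r + b)))]
        push_cast; ring
      · simp [Complex.mul_re]
  set z : ℂ := ((1 / 2 : ℝ) : ℂ) * (((-(a + r) : ℝ) : ℂ) + w) with hzdef
  have hw' : w ^ 2 = ((a : ℂ) + r) ^ 2 - 4 * ((r : ℂ) ^ 2 + a * r + b) := by
    rw [hw]; push_cast; ring
  have hz2 : z ^ 2 + ((a : ℂ) + r) * z + ((r : ℂ) ^ 2 + (a : ℂ) * r + b) = 0 := by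
    rw [hzdef]; push_cast
    linear_combination (1 / 4 : ℂ) * hw'
  have hrC : (r : ℂ) ^ 3 + (a : ℂ) * r ^ 2 + (b : ℂ) * r + c = 0 := by
    exact_mod_cast congrArg (fun x : ℝ => (x : ℂ)) hr
  refine ⟨z, ?_, ?_⟩
  · linear_combination (z - (r : ℂ)) * hz2 + hrC
  · have : z.re = (1 / 2) * (-(a + r) + w.re) := by
      simp [hzdef, Complex.mul_re]
    rw [this]
    nlinarith [hwre, hp]

/-- Instability half of Theorem 2.2: if `0 < ε < ε_c` then the negated
characteristic polynomial has a complex root with strictly positive real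
part. -/
theorem wgss_instability (β α ε κ : ℝ)
    (hβ0 : 0 < β) (hβ1 : β < 1) (hα : 0 < α)
    (hκ0 : 0 ≤ κ) (hκ1 : κ < 1) (hε0 : 0 < ε)
    (hε : ε < 2 * α * β ^ ((3 : ℝ) / 2) * Real.sqrt (1 - κ * β)) :
    ∃ z : ℂ,
      z ^ 3 + (ε : ℂ) * z ^ 2 + (((1 - β ^ 2) / β : ℝ) : ℂ) * z
        + ((2 * α * Real.sqrt β * (1 - β ^ 2) * Real.sqrt (1 - κ * β) : ℝ) : ℂ)
        = 0 ∧ 0 < z.re := by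
  have hβ2 : 0 < 1 - β ^ 2 := by nlinarith
  have hb : 0 < (1 - β ^ 2) / β := div_pos hβ2 hβ0
  have h1 : 0 < 1 - κ * β := by
    nlinarith [mul_nonneg hκ0 (by linarith : (0:ℝ) ≤ 1 - β)]
  have hsb : 0 < Real.sqrt β := Real.sqrt_pos.mpr hβ0
  have hs1 : 0 < Real.sqrt (1 - κ * β) := Real.sqrt_pos.mpr h1
  have hc : 0 < 2 * α * Real.sqrt β * (1 - β ^ 2) * Real.sqrt (1 - κ * β) := by
    have := mul_pos (mul_pos (mul_pos (mul_pos two_pos hα) hsb) hβ2) hs1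
    linarith
  have h32 : β ^ ((3 : ℝ) / 2) = β * Real.sqrt β := by
    rw [show (3 : ℝ) / 2 = 1 + 1 / 2 by norm_num, Real.rpow_add hβ0, Real.rpow_one,
      ← Real.sqrt_eq_rpow]
  have hKb : (2 * α * β ^ ((3 : ℝ) / 2) * Real.sqrt (1 - κ * β)) * ((1 - β ^ 2) / β)
      = 2 * α * Real.sqrt β * (1 - β ^ 2) * Real.sqrt (1 - κ * β) := by
    rw [h32]; field_simp
  have hab : ε * ((1 - β ^ 2) / β)
      < 2 * α * Real.sqrt β * (1 - β ^ 2) * Real.sqrt (1 - κ * β) := by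
    calc ε * ((1 - β ^ 2) / β)
        < (2 * α * β ^ ((3 : ℝ) / 2) * Real.sqrt (1 - κ * β)) * ((1 - β ^ 2) / β) :=
          mul_lt_mul_of_pos_right hε hb
      _ = _ := hKb
  exact cubic_unstable ε ((1 - β ^ 2) / β)
    (2 * α * Real.sqrt β * (1 - β ^ 2) * Real.sqrt (1 - κ * β)) hε0 hb hc hab
end
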